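/- Let (p⁺,e⁺,m⁺) = (p²+2pe, e²+2pm, m²+2em) and (p⁻,e⁻,m⁻) = (p²+m², 1-(1-e)², 2pm) for p,e,m ≥ 0 with p+e+m = 1. If (p,e,m) is a fixed point of both transforms, i.e. (p⁺,e⁺,m⁺) = (p,e,m) = (p⁻,e⁻,m⁻), then (p,e,m) = (1,0,0) or (p,e,m) = (0,1,0). -/
import Mathlib

/-- Variable-node transform of a ternary density `(p,e,m)`. -/
def vplus (d : ℝ × ℝ × ℝ) : ℝ × ℝ × ℝ :=
  (d.1^2 + 2*d.1*d.2.1, d.2.1^2 + 2*d.1*d.2.2, d.2.2^2 + 2*d.2.1*d.2.2)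

/-- Check-node transform of a ternary density `(p,e,m)`. -/
def vminus (d : ℝ × ℝ × ℝ) : ℝ × ℝ × ℝ :=
  (d.1^2 + d.2.2^2, 1 - (1 - d.2.1)^2, 2*d.1*d.2.2)

/-- The only densities fixed by both polarization transforms are the perfect
channel `(1,0,0)` and pure erasure `(0,1,0)`. -/
theorem stmt_10 (p e m : ℝ) (hp : 0 ≤ p) (he : 0 ≤ e) (hm : 0 ≤ m)
    (hsum : p + e + m = 1)
    (hplus : vplus (p, e, m) = (p, e, m)) (hminus : vminus (p, e, m) = (p, e, m)) :
    (p, e, m) = ((1:ℝ), (0:ℝ), (0:ℝ)) ∨ (p, e, m) = ((0:ℝ), (1:ℝ), (0:ℝ)) := by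
  simp only [vplus, vminus, Prod.mk.injEq] at hplus hminus
  obtain ⟨h1, h2, h3⟩ := hplus
  obtain ⟨h4, h5, h6⟩ := hminus
  have hm0 : m = 0 := by
    by_contra hne
    have hp2 : p = 1/2 := by
      rcases mul_eq_zero.mp (show m * (2*p - 1) = 0 by linarith [h6]) with h | h
      · exact absurd h hne
      · linarith
    nlinarith [sq_nonneg m, sq_nonneg (m - 1/2)]
  subst hm0
  rcases mul_eq_zero.mp (show p * (p - 1) = 0 by nlinarith) with h | h
  · right; simp_all
  · left; have : p = 1 := by linarith
    simp_all
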